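/- For any tree T, γ_rdR(T) = γ(T) + γ_r(T) if and only if T is a star. -/

import Mathlib

open Finset

/-- A restrained double Roman dominating function. -/
def IsRDRD {V : Type*} (G : SimpleGraph V) (f : V → ℕ) : Prop :=
  (∀ v, f v ≤ 3) ∧
  (∀ v, f v = 0 →
    (∃ u, G.Adj v u ∧ f u = 3) ∨
    (∃ u w, G.Adj v u ∧ G.Adj v w ∧ u ≠ w ∧ f u = 2 ∧ f w = 2)) ∧
  (∀ v, f v = 1 → ∃ u, G.Adj v u ∧ 2 ≤ f u) ∧
  (∀ v, f v = 0 → ∃ u, G.Adj v u ∧ f u = 0)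

/-- The restrained double Roman domination number. -/
noncomputable def rdrNum {V : Type*} [Fintype V] (G : SimpleGraph V) : ℕ :=
  sInf {k | ∃ f : V → ℕ, IsRDRD G f ∧ ∑ v, f v = k}

def IsDomSet {V : Type*} (G : SimpleGraph V) (S : Set V) : Prop :=
  ∀ v ∉ S, ∃ u ∈ S, G.Adj v u

def IsRDomSet {V : Type*} (G : SimpleGraph V) (S : Set V) : Prop :=
  IsDomSet G S ∧ ∀ v ∉ S, ∃ u ∉ S, G.Adj v u

def IsR2DomSet {V : Type*} (G : SimpleGraph V) (S : Set V) : Prop :=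
  (∀ v ∉ S, ∃ u w, u ∈ S ∧ w ∈ S ∧ u ≠ w ∧ G.Adj v u ∧ G.Adj v w) ∧
  ∀ v ∉ S, ∃ u ∉ S, G.Adj v u

noncomputable def domNum {V : Type*} [Fintype V] (G : SimpleGraph V) : ℕ :=
  sInf {k | ∃ S : Finset V, IsDomSet G ↑S ∧ S.card = k}

noncomputable def rDomNum {V : Type*} [Fintype V] (G : SimpleGraph V) : ℕ :=
  sInf {k | ∃ S : Finset V, IsRDomSet G ↑S ∧ S.card = k}

noncomputable def r2DomNum {V : Type*} [Fintype V] (G : SimpleGraph V) : ℕ :=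
  sInf {k | ∃ S : Finset V, IsR2DomSet G ↑S ∧ S.card = k}

/-- A restrained Roman dominating function. -/
def IsRRD {V : Type*} (G : SimpleGraph V) (f : V → ℕ) : Prop :=
  (∀ v, f v ≤ 2) ∧
  (∀ v, f v = 0 → ∃ u, G.Adj v u ∧ f u = 2) ∧
  (∀ v, f v = 0 → ∃ u, G.Adj v u ∧ f u = 0)

noncomputable def rrNum {V : Type*} [Fintype V] (G : SimpleGraph V) : ℕ :=
  sInf {k | ∃ f : V → ℕ, IsRRD G f ∧ ∑ v, f v = k}

/-- A star: all edges are incident to one common vertex. -/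
def IsStar {V : Type*} (G : SimpleGraph V) : Prop :=
  ∃ x : V, ∀ ⦃a b : V⦄, G.Adj a b → a = x ∨ b = x

/-- The join of two graphs. -/
def joinG {α β : Type*} (G : SimpleGraph α) (H : SimpleGraph β) : SimpleGraph (α ⊕ β) :=
  SimpleGraph.fromRel (fun x y => match x, y with
    | Sum.inl a, Sum.inl b => G.Adj a b
    | Sum.inr a, Sum.inr b => H.Adj a b
    | Sum.inl _, Sum.inr _ => True
    | Sum.inr _, Sum.inl _ => True)

/-- The disjoint union of two graphs. -/
def dUnion {α β : Type*} (G : SimpleGraph α) (H : SimpleGraph β) : SimpleGraph (α ⊕ β) :=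
  SimpleGraph.fromRel (fun x y => match x, y with
    | Sum.inl a, Sum.inl b => G.Adj a b
    | Sum.inr a, Sum.inr b => H.Adj a b
    | _, _ => False)

/-
A restrained double Roman dominating function `f` yields the dominating set `{f ≥ 2}` and the
restrained dominating set `{f ≥ 1}`, whose sizes add up to at most the weight of `f`; hence
`γ + γ_r ≤ γ_rdR` for every graph. For a star with `n` vertices the only restrained dominating set
is the whole vertex set, so `γ + γ_r = 1 + n`, the weight of `2` on the centre and `1` elsewhere.

If a tree is not a star, every RDRD function `f` loses weight somewhere: a value `3` is wasted;
if `f` has no zeros, deleting the middle edge of a path `P₄` gives a restrained dominating set of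
size `n - 2`; a positive vertex with both a zero and a positive neighbour can be removed from
`{f ≥ 1}`; otherwise `f` only takes the values `0` and `2`, the `2`s are adjacent only to `0`s,
and counting the at least `2|{f = 0}| + 1` edges of the tree shows `|{f = 0}| < |{f = 2}|`,
so the zeros form a smaller dominating set.
-/

namespace SimpleGraph

variable {V : Type*} {G : SimpleGraph V}

theorem Preconnected.forall_of_forall_adj (hG : G.Preconnected) {P : V → Prop}
    (hP : ∀ ⦃u w⦄, G.Adj u w → P u → P w) {u : V} (hu : P u) (t : V) : P t := by
  induction (G.reachable_iff_reflTransGen u t).1 (hG u t) with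
  | refl => exact hu
  | tail _ hadj ih => exact hP hadj ih

theorem Connected.exists_adj_of_ne (hG : G.Connected) {v w : V} (hvw : v ≠ w) :
    ∃ u, G.Adj v u := by
  obtain ⟨p⟩ := hG.preconnected v w
  cases p with
  | nil => exact absurd rfl hvw
  | cons h _ => exact ⟨_, h⟩

theorem isStar_of_forall_adj_leaf (hG : G.Connected)
    (h : ∀ ⦃b c⦄, G.Adj b c → (∀ a, G.Adj b a → a = c) ∨ (∀ d, G.Adj c d → d = b)) :
    IsStar G := by
  obtain ⟨x⟩ := hG.nonempty
  by_cases hE : ∃ b c, G.Adj b c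
  · obtain ⟨b, c, hbc⟩ := hE
    obtain ⟨u, v, huv, hu⟩ : ∃ u v, G.Adj u v ∧ ∀ a, G.Adj u a → a = v :=
      (h hbc).elim (fun hb => ⟨b, c, hbc, hb⟩) (fun hc => ⟨c, b, hbc.symm, hc⟩)
    have hleaves : ∀ t, t = v ∨ ∀ a, G.Adj t a → a = v := by
      refine hG.preconnected.forall_of_forall_adj ?_ (Or.inl rfl)
      rintro s w hsw (rfl | hs)
      · by_cases hwu : w = u
        · exact Or.inr (hwu ▸ hu)
        · exact Or.inr ((h hsw).resolve_left fun hs => hwu (hs u huv.symm).symm)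
      · exact Or.inl (hs w hsw)
    exact ⟨v, fun a b hab => (hleaves a).imp_right fun ha => ha b hab⟩
  · push Not at hE
    exact ⟨x, fun a b hab => (hE a b hab).elim⟩

theorem exists_adj_adj_adj_of_not_isStar (hG : G.Connected) (hs : ¬ IsStar G) :
    ∃ a b c d, G.Adj a b ∧ G.Adj b c ∧ G.Adj c d ∧ a ≠ c ∧ d ≠ b := by
  contrapose! hs
  refine isStar_of_forall_adj_leaf hG fun b c hbc => ?_
  by_contra! h
  obtain ⟨⟨a, hba, hac⟩, d, hcd, hdb⟩ := h
  exact hdb (hs a b c d hba.symm hbc hcd hac)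

theorem adj_of_isStar (hG : G.Connected) {x : V} (hx : ∀ ⦃a b⦄, G.Adj a b → a = x ∨ b = x)
    {v : V} (hv : v ≠ x) : G.Adj v x := by
  obtain ⟨p⟩ := hG.preconnected v x
  cases p with
  | nil => exact absurd rfl hv
  | cons h _ => exact ((hx h).resolve_left hv) ▸ h

theorem card_mul_lt_card_edgeFinset [Fintype V] [DecidableRel G.Adj] [Fintype G.edgeSet]
    {S T : Finset V} (hST : Disjoint S T) {k : ℕ}
    (hk : ∀ s ∈ S, k ≤ #{t ∈ T | G.Adj s t}) {x y : V} (hxy : G.Adj x y) (hx : x ∉ T)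
    (hy : y ∉ T) : k * #S < #G.edgeFinset := by
  classical
  set P := S.sigma fun s => ({t ∈ T | G.Adj s t} : Finset V)
  have hP : k * #S ≤ #P := by
    rw [card_sigma, mul_comm]
    exact card_nsmul_le_sum _ _ _ hk
  have hmaps : ∀ p ∈ P, s(p.1, p.2) ∈ G.edgeFinset.erase s(x, y) := by
    rintro ⟨s, t⟩ hp
    simp only [P, mem_sigma, mem_filter] at hp
    refine mem_erase.2 ⟨fun he => ?_, mem_edgeFinset.2 hp.2.2⟩
    rcases Sym2.eq_iff.1 he with ⟨-, rfl⟩ | ⟨-, rfl⟩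
    exacts [hy hp.2.1, hx hp.2.1]
  have hinj : Set.InjOn (fun p : Σ _ : V, V => s(p.1, p.2)) P := by
    rintro ⟨s, t⟩ hp ⟨s', t'⟩ hp' he
    simp only [P, coe_sigma, Set.mem_sigma_iff, coe_filter, Set.mem_ofPred_eq, mem_coe] at hp hp'
    rcases Sym2.eq_iff.1 he with ⟨rfl, rfl⟩ | ⟨rfl, -⟩
    · rfl
    · exact (Finset.disjoint_left.1 hST hp.1 hp'.2.1).elim
  calc k * #S ≤ #P := hP
    _ ≤ #(G.edgeFinset.erase s(x, y)) := card_le_card_of_injOn _ hmaps hinj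
    _ < #G.edgeFinset := card_erase_lt_of_mem (mem_edgeFinset.2 hxy)

end SimpleGraph

namespace IsRDRD

variable {V : Type*} {G : SimpleGraph V} {f : V → ℕ}

theorem isDomSet (hf : IsRDRD G f) : IsDomSet G {v | 2 ≤ f v} := by
  intro v hv
  obtain h0 | h1 : f v = 0 ∨ f v = 1 := by simp only [Set.mem_ofPred_eq] at hv; omega
  · rcases hf.2.1 v h0 with ⟨u, hu, hu3⟩ | ⟨u, -, hu, -, -, hu2, -⟩
    · exact ⟨u, by simp [hu3], hu⟩
    · exact ⟨u, by simp [hu2], hu⟩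
  · obtain ⟨u, hu, hu2⟩ := hf.2.2.1 v h1
    exact ⟨u, hu2, hu⟩

theorem isRDomSet (hf : IsRDRD G f) : IsRDomSet G {v | 1 ≤ f v} := by
  refine ⟨fun v hv => ?_, fun v hv => ?_⟩ <;> have h0 : f v = 0 := by simpa using hv
  · obtain ⟨u, hu2, hu⟩ := hf.isDomSet v (by simp [h0])
    exact ⟨u, Set.mem_ofPred.2 (le_trans one_le_two hu2), hu⟩
  · obtain ⟨u, hu, hu0⟩ := hf.2.2.2 v h0
    exact ⟨u, by simp [hu0], hu⟩

/-- Without values `3` every zero has two neighbours valued `2`, so one of them survives the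
removal of `u`. -/
theorem isRDomSet_diff_singleton (hf : IsRDRD G f) (hf2 : ∀ v, f v ≤ 2) {u z w : V}
    (huz : G.Adj u z) (hz : f z = 0) (huw : G.Adj u w) (hw : 1 ≤ f w) :
    IsRDomSet G ({v | 1 ≤ f v} \ {u}) := by
  have hmem : ∀ v, v ∈ ({v | 1 ≤ f v} \ {u} : Set V) ↔ 1 ≤ f v ∧ v ≠ u := fun v => by simp
  have hzero : ∀ v, v ∉ ({v | 1 ≤ f v} \ {u} : Set V) → v ≠ u → f v = 0 := fun v hv hvu => by
    by_contra h
    exact hv ((hmem v).2 ⟨by omega, hvu⟩)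
  refine ⟨fun v hv => ?_, fun v hv => ?_⟩ <;> by_cases hvu : v = u
  · exact ⟨w, (hmem w).2 ⟨hw, hvu ▸ huw.ne'⟩, hvu ▸ huw⟩
  · obtain ⟨a, b, hva, hvb, hab, ha, hb⟩ :=
      (hf.2.1 v (hzero v hv hvu)).resolve_left fun ⟨a, _, ha⟩ => by linarith [hf2 a]
    by_cases hau : a = u
    · exact ⟨b, (hmem b).2 ⟨by omega, hau ▸ hab.symm⟩, hvb⟩
    · exact ⟨a, (hmem a).2 ⟨by omega, hau⟩, hva⟩
  · exact ⟨z, fun h => by simp [hz] at h, hvu ▸ huz⟩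
  · obtain ⟨a, hva, ha⟩ := hf.2.2.2 v (hzero v hv hvu)
    exact ⟨a, fun h => by simp [ha] at h, hva⟩

theorem eq_zero_or_of_forall_adj (hf : IsRDRD G f) (hG : G.Preconnected) (hf2 : ∀ v, f v ≤ 2)
    {v₀ : V} (hv₀ : f v₀ = 0)
    (hsep : ∀ u, 1 ≤ f u → (∃ z, G.Adj u z ∧ f z = 0) → ∀ w, G.Adj u w → f w = 0) (t : V) :
    f t = 0 ∨ (f t = 2 ∧ ∀ w, G.Adj t w → f w = 0) := by
  refine hG.forall_of_forall_adj (P := fun t => f t = 0 ∨ (f t = 2 ∧ ∀ w, G.Adj t w → f w = 0))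
    (fun s w hsw hs => ?_) (Or.inl hv₀) t
  rcases hs with hs | ⟨-, hs⟩
  · by_cases hw : f w = 0
    · exact Or.inl hw
    · have hall := hsep w (by omega) ⟨s, hsw.symm, hs⟩
      have hw1 : f w ≠ 1 := fun hw1 => by
        obtain ⟨a, hwa, ha⟩ := hf.2.2.1 w hw1
        simp [hall a hwa] at ha
      exact Or.inr ⟨by have := hf2 w; omega, hall⟩
  · exact Or.inl (hs w hsw)

end IsRDRD

section

variable {V : Type*} {G : SimpleGraph V} {f : V → ℕ}

theorem IsRDomSet.eq_univ_of_isStar {S : Set V} (hS : IsRDomSet G S) {x : V}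
    (hx : ∀ ⦃a b⦄, G.Adj a b → a = x ∨ b = x) : S = Set.univ := by
  have hxS : x ∈ S := by
    by_contra hxS
    obtain ⟨u, huS, hxu⟩ := hS.2 x hxS
    obtain ⟨w, hwS, huw⟩ := hS.1 u huS
    rcases hx huw with rfl | rfl
    exacts [hxu.ne rfl, hxS hwS]
  refine Set.eq_univ_of_forall fun v => by_contra fun hv => ?_
  obtain ⟨u, huS, hvu⟩ := hS.2 v hv
  rcases hx hvu with rfl | rfl
  exacts [hv hxS, huS hxS]

theorem isDomSet_setOf_eq_zero (hG : G.Connected) {v₀ : V} (hv₀ : f v₀ = 0)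
    (hP : ∀ t, f t = 0 ∨ (f t = 2 ∧ ∀ w, G.Adj t w → f w = 0)) : IsDomSet G {v | f v = 0} := by
  intro v hv
  have hv0 : f v ≠ 0 := hv
  obtain ⟨u, hvu⟩ := hG.exists_adj_of_ne (v := v) (w := v₀) (by rintro rfl; exact hv0 hv₀)
  exact ⟨u, ((hP v).resolve_left hv0).2 u hvu, hvu⟩

end

section Numbers

variable {V : Type*} [Fintype V] {G : SimpleGraph V} {f : V → ℕ}

theorem domNum_le_card {S : Finset V} (hS : IsDomSet G S) : domNum G ≤ #S :=
  Nat.sInf_le ⟨S, hS, rfl⟩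

theorem rDomNum_le_card {S : Finset V} (hS : IsRDomSet G S) : rDomNum G ≤ #S :=
  Nat.sInf_le ⟨S, hS, rfl⟩

theorem le_domNum {k : ℕ} (h : ∀ S : Finset V, IsDomSet G S → k ≤ #S) : k ≤ domNum G :=
  le_csInf ⟨_, univ, fun v hv => absurd (mem_univ v) hv, rfl⟩
    (by rintro _ ⟨S, hS, rfl⟩; exact h S hS)

theorem le_rDomNum {k : ℕ} (h : ∀ S : Finset V, IsRDomSet G S → k ≤ #S) : k ≤ rDomNum G :=
  le_csInf ⟨_, univ, ⟨fun v hv => absurd (mem_univ v) hv, fun v hv => absurd (mem_univ v) hv⟩,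
    rfl⟩ (by rintro _ ⟨S, hS, rfl⟩; exact h S hS)

theorem rdrNum_le_sum (hf : IsRDRD G f) : rdrNum G ≤ ∑ v, f v :=
  Nat.sInf_le ⟨f, hf, rfl⟩

theorem exists_isRDRD_sum_eq_rdrNum (G : SimpleGraph V) :
    ∃ f, IsRDRD G f ∧ ∑ v, f v = rdrNum G :=
  Nat.sInf_mem (s := {k | ∃ f : V → ℕ, IsRDRD G f ∧ ∑ v, f v = k})
    ⟨_, fun _ => 2, by simp [IsRDRD], rfl⟩

theorem card_two_le_add_card_one_le_le_sum (f : V → ℕ) :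
    #{v | 2 ≤ f v} + #{v | 1 ≤ f v} ≤ ∑ v, f v := by
  rw [card_filter, card_filter, ← sum_add_distrib]
  exact sum_le_sum fun v _ => by split_ifs <;> omega

theorem card_two_le_add_card_one_le_lt_sum (h : ∃ v, 3 ≤ f v) :
    #{v | 2 ≤ f v} + #{v | 1 ≤ f v} < ∑ v, f v := by
  obtain ⟨v, hv⟩ := h
  rw [card_filter, card_filter, ← sum_add_distrib]
  exact sum_lt_sum (fun v _ => by split_ifs <;> omega) ⟨v, mem_univ v, by split_ifs <;> omega⟩

theorem IsRDRD.domNum_le (hf : IsRDRD G f) : domNum G ≤ #{v | 2 ≤ f v} :=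
  domNum_le_card (by simpa using hf.isDomSet)

theorem IsRDRD.rDomNum_le (hf : IsRDRD G f) : rDomNum G ≤ #{v | 1 ≤ f v} :=
  rDomNum_le_card (by simpa using hf.isRDomSet)

theorem domNum_add_rDomNum_le_rdrNum (G : SimpleGraph V) : domNum G + rDomNum G ≤ rdrNum G := by
  obtain ⟨f, hf, hsum⟩ := exists_isRDRD_sum_eq_rdrNum G
  have := card_two_le_add_card_one_le_le_sum f
  have := hf.domNum_le
  have := hf.rDomNum_le
  omega

theorem rdrNum_le_of_isStar (hG : G.Connected) (hs : IsStar G) :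
    rdrNum G ≤ domNum G + rDomNum G := by
  classical
  obtain ⟨x, hx⟩ := hs
  have hf : IsRDRD G fun v => if v = x then 2 else 1 := by
    refine ⟨fun v => by dsimp only; split_ifs <;> omega,
      fun v hv => by dsimp only at hv; split_ifs at hv, fun v hv => ?_,
      fun v hv => by dsimp only at hv; split_ifs at hv⟩
    have hvx : v ≠ x := by rintro rfl; simp at hv
    exact ⟨x, SimpleGraph.adj_of_isStar hG hx hvx, by simp⟩
  have hweight : ∑ v, (if v = x then 2 else 1) = Fintype.card V + 1 := by
    have := Fintype.card_pos_iff.2 ⟨x⟩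
    rw [← add_sum_erase _ _ (mem_univ x), sum_congr rfl fun v hv => if_neg (ne_of_mem_erase hv)]
    simp only [↓reduceIte, sum_const, mem_univ, card_erase_of_mem, card_univ, smul_eq_mul, mul_one]
    omega
  have hdom : 1 ≤ domNum G := le_domNum fun S hS => card_pos.2 <| nonempty_iff_ne_empty.2 <| by
    rintro rfl
    obtain ⟨u, hu, -⟩ := hS x (by simp)
    simp at hu
  have hrdom : Fintype.card V ≤ rDomNum G := le_rDomNum fun S hS => by
    rw [coe_eq_univ.1 (hS.eq_univ_of_isStar hx), card_univ]
  have := rdrNum_le_sum hf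
  omega

end Numbers

section Trees

variable {V : Type*} [Fintype V] {G : SimpleGraph V} {f : V → ℕ}

/-- Each zero sends two edges to `{f = 2}` and one more edge joins two zeros, while the tree has
only `#{f = 0} + #{f = 2} - 1` edges. -/
theorem card_eq_zero_lt_card_two_le (hT : G.IsTree) (hf : IsRDRD G f) {v₀ : V}
    (hv₀ : f v₀ = 0) (hP : ∀ t, f t = 0 ∨ (f t = 2 ∧ ∀ w, G.Adj t w → f w = 0)) :
    #{v | f v = 0} < #{v | 2 ≤ f v} := by
  classical
  set Z : Finset V := {v | f v = 0}
  set D : Finset V := {v | 2 ≤ f v}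
  have hZD : Disjoint Z D := disjoint_filter.2 fun v _ h => by omega
  have htwo : ∀ z ∈ Z, 2 ≤ #{t ∈ D | G.Adj z t} := by
    intro z hz
    rw [mem_filter] at hz
    rcases hf.2.1 z hz.2 with ⟨a, -, ha⟩ | ⟨a, b, hza, hzb, hab, ha, hb⟩
    · rcases hP a with h | h <;> omega
    · calc 2 = #{a, b} := (card_pair hab).symm
        _ ≤ _ := card_le_card fun t ht => by
          rcases mem_insert.1 ht with rfl | ht
          · simp [D, ha, hza]
          · rw [mem_singleton.1 ht]; simp [D, hb, hzb]
  obtain ⟨z₀, hv₀z₀, hz₀⟩ := hf.2.2.2 v₀ hv₀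
  have hedges := SimpleGraph.card_mul_lt_card_edgeFinset hZD htwo hv₀z₀ (by simp [D, hv₀])
    (by simp [D, hz₀])
  have hcover : Fintype.card V ≤ #Z + #D := by
    calc Fintype.card V = #(Z ∪ D) := by
          rw [← card_univ]
          congr
          ext v
          simp only [mem_univ, mem_union, mem_filter, true_and, true_iff, Z, D]
          rcases hP v with h | h <;> omega
      _ ≤ #Z + #D := card_union_le _ _
  have := hT.card_edgeFinset
  omega

theorem rDomNum_add_two_le_card (hG : G.Connected) (hs : ¬ IsStar G) :
    rDomNum G + 2 ≤ Fintype.card V := by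
  classical
  obtain ⟨a, b, c, d, hab, hbc, hcd, hac, hdb⟩ :=
    SimpleGraph.exists_adj_adj_adj_of_not_isStar hG hs
  have hS : IsRDomSet G ↑({b, c}ᶜ : Finset V) := by
    have hmem : ∀ v, v ∉ (↑({b, c}ᶜ : Finset V) : Set V) ↔ v = b ∨ v = c := by
      simp [or_iff_not_imp_right]
    refine ⟨fun v hv => ?_, fun v hv => ?_⟩ <;> rcases (hmem v).1 hv with hv | hv <;> rw [hv]
    · exact ⟨a, by simp [hab.ne, hac], hab.symm⟩
    · exact ⟨d, by simp [hdb, hcd.ne'], hcd⟩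
    · exact ⟨c, by simp, hbc⟩
    · exact ⟨b, by simp, hbc.symm⟩
  have hcard := rDomNum_le_card hS
  rw [card_compl, card_pair hbc.ne] at hcard
  have := card_le_univ ({b, c} : Finset V)
  rw [card_pair hbc.ne] at this
  omega

theorem domNum_add_rDomNum_lt_sum (hT : G.IsTree) (hs : ¬ IsStar G) (hf : IsRDRD G f) :
    domNum G + rDomNum G < ∑ v, f v := by
  classical
  have hD := hf.domNum_le
  have hR := hf.rDomNum_le
  have hsum := card_two_le_add_card_one_le_le_sum f
  by_cases h3 : ∃ v, 3 ≤ f v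
  · have := card_two_le_add_card_one_le_lt_sum h3
    omega
  have hf2 : ∀ v, f v ≤ 2 := fun v => by push Not at h3; exact Nat.le_of_lt_succ (h3 v)
  by_cases hpos : ∀ v, 1 ≤ f v
  · have hR_univ : #{v | 1 ≤ f v} = Fintype.card V := by
      rw [filter_true_of_mem fun v _ => hpos v, card_univ]
    have := rDomNum_add_two_le_card hT.connected hs
    omega
  obtain ⟨v₀, hv₀⟩ : ∃ v₀, f v₀ = 0 := by push Not at hpos; simpa using hpos
  by_cases hsep : ∀ u, 1 ≤ f u → (∃ z, G.Adj u z ∧ f z = 0) → ∀ w, G.Adj u w → f w = 0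
  · have hP := hf.eq_zero_or_of_forall_adj hT.connected.preconnected hf2 hv₀ hsep
    have hZ : domNum G ≤ #{v | f v = 0} :=
      domNum_le_card (by simpa using isDomSet_setOf_eq_zero hT.connected hv₀ hP)
    have := card_eq_zero_lt_card_two_le hT hf hv₀ hP
    omega
  · push Not at hsep
    obtain ⟨u, hu, ⟨z, huz, hz⟩, w, huw, hw⟩ := hsep
    have hR' : rDomNum G ≤ #(({v | 1 ≤ f v} : Finset V).erase u) := rDomNum_le_card
      (by simpa using hf.isRDomSet_diff_singleton hf2 huz hz huw (Nat.one_le_iff_ne_zero.2 hw))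
    have := card_erase_lt_of_mem (s := ({v | 1 ≤ f v} : Finset V)) (by simpa using hu)
    omega

end Trees

theorem stmt_14 {V : Type*} [Fintype V] (G : SimpleGraph V) (hT : G.IsTree) :
    rdrNum G = domNum G + rDomNum G ↔ IsStar G := by
  refine ⟨fun heq => ?_, fun hs =>
    (rdrNum_le_of_isStar hT.connected hs).antisymm (domNum_add_rDomNum_le_rdrNum G)⟩
  by_contra hs
  obtain ⟨f, hf, hsum⟩ := exists_isRDRD_sum_eq_rdrNum G
  exact (domNum_add_rDomNum_lt_sum hT hs hf).ne (hsum.trans heq).symm
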